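/- Realizability of pairs in S: for every pair (q₁,q₂) in the fixpoint S of the pair-coverability operator, there exist k ≥ 2, a line topology with vertices v₁,…,v_k, and an execution from the initial configuration reaching a configuration in which v₁ is in state q₁ and v₂ is in state q₂. -/

import Mathlib

namespace BN

/-- Actions of a broadcast protocol: broadcast `!!m`, reception `?m`, internal `τ`. -/
inductive Act (M : Type) : Type where
  | brd : M → Act M
  | rcv : M → Act M
  | tau : Act M

/-- A broadcast protocol: an initial state and a set of transitions. -/
structure Protocol (Q M : Type) : Type where
  qin : Q
  delta : Set (Q × Act M × Q)

variable {Q M V : Type}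

/-- `q` has an outgoing reception of `m`. -/
def canRecv (P : Protocol Q M) (q : Q) (m : M) : Prop :=
  ∃ q', (q, Act.rcv m, q') ∈ P.delta

/-- One step of the broadcast network semantics over topology `G`,
performed by vertex `v` taking transition `t`. -/
def Step (G : SimpleGraph V) (P : Protocol Q M) (v : V)
    (t : Q × Act M × Q) (L L' : V → Q) : Prop :=
  t ∈ P.delta ∧ L v = t.1 ∧ L' v = t.2.2 ∧
  (match t.2.1 with
   | Act.tau => ∀ u, u ≠ v → L' u = L u
   | Act.brd m =>
       (∀ u, G.Adj v u →
          ((L u, Act.rcv m, L' u) ∈ P.delta ∨ (¬ canRecv P (L u) m ∧ L' u = L u))) ∧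
       (∀ u, u ≠ v → ¬ G.Adj v u → L' u = L u)
   | Act.rcv _ => False)

def StepAny (G : SimpleGraph V) (P : Protocol Q M) (L L' : V → Q) : Prop :=
  ∃ v t, Step G P v t L L'

def Reach (G : SimpleGraph V) (P : Protocol Q M) : (V → Q) → (V → Q) → Prop :=
  Relation.ReflTransGen (StepAny G P)

def initConf (P : Protocol Q M) : V → Q := fun _ => P.qin

/-- `qf` is coverable over the class of all (finite) graph topologies. -/
def Coverable (P : Protocol Q M) (qf : Q) : Prop :=
  ∃ (V' : Type) (_ : Fintype V') (G : SimpleGraph V') (L : V' → Q),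
    Reach G P (initConf P) L ∧ ∃ v, L v = qf

/-- A tree topology: a prefix-closed finite set of words over ℕ containing ε. -/
structure TreeTopo : Type where
  verts : Finset (List ℕ)
  nil_mem : ([] : List ℕ) ∈ verts
  prefixClosed : ∀ w ∈ verts, ∀ w' : List ℕ, w' <+: w → w' ∈ verts

abbrev TreeTopo.Vert (T : TreeTopo) : Type := {w : List ℕ // w ∈ T.verts}

def TreeTopo.root (T : TreeTopo) : T.Vert := ⟨[], T.nil_mem⟩

/-- The graph of a tree topology: each word `w ++ [x]` is adjacent to its parent `w`. -/
def TreeTopo.graph (T : TreeTopo) : SimpleGraph T.Vert where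
  Adj u v := (∃ x : ℕ, (v : List ℕ) = (u : List ℕ) ++ [x]) ∨
             (∃ x : ℕ, (u : List ℕ) = (v : List ℕ) ++ [x])
  symm := by constructor; intro u v h; exact Or.symm h
  loopless := by
    constructor; intro u h
    rcases h with ⟨x, hx⟩ | ⟨x, hx⟩ <;> simpa using congrArg List.length hx

def CoverableWith (T : TreeTopo) (P : Protocol Q M) (qf : Q) : Prop :=
  ∃ L : T.Vert → Q, Reach T.graph P (initConf P) L ∧ ∃ u, L u = qf

def CoverableTreeRoot (P : Protocol Q M) (qf : Q) : Prop :=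
  ∃ (T : TreeTopo) (L : T.Vert → Q),
    Reach T.graph P (initConf P) L ∧ L T.root = qf

/-- `(T, lam)` is the unfolding of graph `G` at vertex `v` to depth `n`. -/
structure IsUnfolding {V : Type} (G : SimpleGraph V) (v : V) (n : ℕ)
    (T : TreeTopo) (lam : T.Vert → V) : Prop where
  root_lbl : lam T.root = v
  depth_le : ∀ w ∈ T.verts, w.length ≤ n
  root_children :
    Set.BijOn lam {u : T.Vert | ∃ x : ℕ, (u : List ℕ) = [x]} (G.neighborSet v)
  children : ∀ (u : T.Vert) (w : List ℕ) (hw : w ∈ T.verts) (x : ℕ),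
      (u : List ℕ) = w ++ [x] → (u : List ℕ).length < n →
      Set.BijOn lam {u' : T.Vert | ∃ y : ℕ, (u' : List ℕ) = (u : List ℕ) ++ [y]}
        (G.neighborSet (lam u) \ {lam ⟨w, hw⟩})
  no_deep : ∀ u : T.Vert, n ≤ (u : List ℕ).length →
      ∀ x : ℕ, (u : List ℕ) ++ [x] ∉ T.verts

/-- Phase tags annotating states: `zero` (phase 0), broadcast phase `j`, reception phase `j`. -/
inductive PTag : Type where
  | zero : PTag
  | bph : ℕ → PTag
  | rph : ℕ → PTag
deriving DecidableEq

def bOf : ℕ → PTag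
  | 0 => .zero
  | j+1 => .bph (j+1)

def rOf : ℕ → PTag
  | 0 => .zero
  | j+1 => .rph (j+1)

/-- `φ` witnesses that `P` is `k`-phase-bounded. -/
def IsPhaseAssignment (k : ℕ) (P : Protocol Q M) (φ : Q → PTag) : Prop :=
  φ P.qin = .zero ∧
  (∀ q : Q, φ q = .zero ∨ ∃ j, 1 ≤ j ∧ j ≤ k ∧ (φ q = .bph j ∨ φ q = .rph j)) ∧
  ∀ t ∈ P.delta,
    (match t.2.1 with
     | Act.tau => φ t.1 = φ t.2.2
     | Act.brd _ =>
         (∃ j, 1 ≤ j ∧ j ≤ k ∧ φ t.1 = .bph j ∧ φ t.2.2 = .bph j) ∨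
         (∃ i, i < k ∧ φ t.1 = rOf i ∧ φ t.2.2 = .bph (i+1))
     | Act.rcv _ =>
         (∃ j, 1 ≤ j ∧ j ≤ k ∧ φ t.1 = .rph j ∧ φ t.2.2 = .rph j) ∨
         (∃ i, i < k ∧ φ t.1 = bOf i ∧ φ t.2.2 = .rph (i+1)) ∨
         (1 ≤ k ∧ φ t.1 = .bph k ∧ φ t.2.2 = .rph k))

def IsPhaseBounded (k : ℕ) (P : Protocol Q M) : Prop :=
  ∃ φ : Q → PTag, IsPhaseAssignment k P φ

/-- The `k`-unfolding `Pₖ` of a protocol `P`. -/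
def unfoldP (P : Protocol Q M) (k : ℕ) : Protocol (Q × PTag) M where
  qin := (P.qin, .zero)
  delta :=
    {t | ∃ q p, (q, Act.tau, p) ∈ P.delta ∧ t = ((q, .zero), Act.tau, (p, .zero))} ∪
    {t | ∃ q p α j, 1 ≤ j ∧ j ≤ k ∧ (q, α, p) ∈ P.delta ∧
        (α = Act.tau ∨ ∃ m, α = Act.rcv m) ∧ t = ((q, .rph j), α, (p, .rph j))} ∪
    {t | ∃ q p α j, 1 ≤ j ∧ j ≤ k ∧ (q, α, p) ∈ P.delta ∧
        (α = Act.tau ∨ ∃ m, α = Act.brd m) ∧ t = ((q, .bph j), α, (p, .bph j))} ∪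
    {t | ∃ q p m j, j < k ∧ (q, Act.brd m, p) ∈ P.delta ∧
        t = ((q, rOf j), Act.brd m, (p, .bph (j+1)))} ∪
    {t | ∃ q p m j, j < k ∧ (q, Act.rcv m, p) ∈ P.delta ∧
        t = ((q, bOf j), Act.rcv m, (p, .rph (j+1)))} ∪
    {t | ∃ q p m, 1 ≤ k ∧ (q, Act.rcv m, p) ∈ P.delta ∧
        t = ((q, .bph k), Act.rcv m, (p, .rph k))}

/-- Star topology: root `none` adjacent to every leaf `some i`, no other edges. -/
def starGraph (ι : Type) : SimpleGraph (Option ι) where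
  Adj u v := (u = none ∧ v ≠ none) ∨ (v = none ∧ u ≠ none)
  symm := by constructor; intro u v h; tauto
  loopless := by constructor; intro u h; tauto

/-- For a 1-phase-bounded protocol with witness `φ`, `Q^b = Q₀ ∪ Q₁^b`. -/
def Qb (φ : Q → PTag) : Set Q := {q | φ q = .zero ∨ φ q = .bph 1}

/-- The set component of the broadcast-print of a star configuration. -/
def bprintSet {ι : Type} (φ : Q → PTag) (L : Option ι → Q) : Set Q :=
  {q | q ∈ Qb φ ∧ ∃ i, L (some i) = q}

/-- The abstract transition relation `⇒` on broadcast-prints. -/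
def PrintStep (P : Protocol Q M) (φ : Q → PTag) :
    (Q × Set Q) → (Q × Set Q) → Prop := fun pr pr' =>
  ∃ (ι : Type) (_ : Fintype ι) (L L' : Option ι → Q),
    StepAny (starGraph ι) P L L' ∧ L none ∈ Qb φ ∧ L' none ∈ Qb φ ∧
    pr = (L none, bprintSet φ L) ∧ pr' = (L' none, bprintSet φ L')

/-- Line topology on `Fin ℓ`: consecutive vertices are adjacent. -/
def lineGraph (ℓ : ℕ) : SimpleGraph (Fin ℓ) where
  Adj i j := (i : ℕ) + 1 = (j : ℕ) ∨ (j : ℕ) + 1 = (i : ℕ)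
  symm := by constructor; intro i j h; tauto
  loopless := by constructor; intro i h; rcases h with h | h <;> omega

/-- `t` is a broadcast transition. -/
def IsBrdT (t : Q × Act M × Q) : Prop := ∃ m, t.2.1 = Act.brd m

/-- In the execution described by `vs, ts` of length `n`, `i` is the first index at
which vertex `u` performs a broadcast. -/
def IsFirstBrd {V' : Type} (vs : ℕ → V') (ts : ℕ → Q × Act M × Q) (n : ℕ)
    (u : V') (i : ℕ) : Prop :=
  i < n ∧ vs i = u ∧ IsBrdT (ts i) ∧ ∀ j < i, vs j = u → ¬ IsBrdT (ts j)

/-- Every transition of `u` occurs no later than every broadcast of `w`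
(i.e. lastBroadcast(u) ≤ firstBroadcast(w)). -/
def BrdOrder {V' : Type} (n : ℕ) (vs : ℕ → V') (ts : ℕ → Q × Act M × Q)
    (u w : V') : Prop :=
  ∀ j j', j < n → j' < n → vs j = u → vs j' = w → IsBrdT (ts j') → j ≤ j'

/-- One application of the pair-coverability operator. -/
def pairStep (P : Protocol Q M) (S : Set (Q × Q)) : Set (Q × Q) :=
  S ∪
  {p | ∃ p₁, (p₁, p.2) ∈ S ∧ (p₁, Act.tau, p.1) ∈ P.delta} ∪
  {p | ∃ p₂, (p.1, p₂) ∈ S ∧ (p₂, Act.tau, p.2) ∈ P.delta} ∪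
  {p | ∃ p₁ p₂ m, (p₁, p₂) ∈ S ∧ (p₂, Act.brd m, p.2) ∈ P.delta ∧
      (p₁, Act.rcv m, p.1) ∈ P.delta} ∪
  {p | ∃ p₂ m, (p.1, p₂) ∈ S ∧ (p₂, Act.brd m, p.2) ∈ P.delta ∧ ¬ canRecv P p.1 m} ∪
  {p | p.1 = P.qin ∧ ∃ q', (p.2, q') ∈ S}

/-- The iteration `S₀ ⊆ S₁ ⊆ …` of the pair-coverability operator. -/
def Siter (P : Protocol Q M) : ℕ → Set (Q × Q)
  | 0 => {(P.qin, P.qin)}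
  | i+1 => pairStep P (Siter P i)

/-! Induction along the iteration `Siter`, with the invariant that the leftmost vertex of the
line never broadcasts. Then prepending a fresh vertex in `qin` to a line execution is again an
execution: the new vertex is only adjacent to the old leftmost one, hears nothing and stays in
`qin`, which realizes the left-extension rule. Broadcasts of the second vertex are received by
the first one as the rule prescribes; the third vertex, if any, reacts arbitrarily. -/

section Realizable

variable {G : SimpleGraph V} {P : Protocol Q M}

open Classical in
noncomputable def receiveOrStay (P : Protocol Q M) (m : M) (q : Q) : Q :=
  if h : canRecv P q m then h.choose else q

lemma receiveOrStay_spec (P : Protocol Q M) (m : M) (q : Q) :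
    (q, Act.rcv m, receiveOrStay P m q) ∈ P.delta ∨
      (¬ canRecv P q m ∧ receiveOrStay P m q = q) := by
  unfold receiveOrStay
  split_ifs with h
  · exact Or.inl h.choose_spec
  · exact Or.inr ⟨h, rfl⟩

lemma step_tau [DecidableEq V] {L : V → Q} {v : V} {q : Q} (h : (L v, Act.tau, q) ∈ P.delta) :
    Step G P v (L v, Act.tau, q) L (Function.update L v q) :=
  ⟨h, rfl, Function.update_self .., fun _ hu => Function.update_of_ne hu _ _⟩

open Classical in
lemma step_brd {L : V → Q} {v : V} {m : M} {b : Q} (R : V → Q)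
    (hb : (L v, Act.brd m, b) ∈ P.delta)
    (hR : ∀ u, G.Adj v u →
      (L u, Act.rcv m, R u) ∈ P.delta ∨ (¬ canRecv P (L u) m ∧ R u = L u)) :
    Step G P v (L v, Act.brd m, b) L
      (fun u => if u = v then b else if G.Adj v u then R u else L u) := by
  refine ⟨hb, rfl, if_pos rfl, fun u hu => ?_, fun u hu hnadj => ?_⟩
  · simpa [G.ne_of_adj hu |>.symm, hu] using hR u hu
  · simp [hu, hnadj]

lemma lineGraph_adj_succ_succ {ℓ : ℕ} {i j : Fin ℓ} :
    (lineGraph (ℓ+1)).Adj i.succ j.succ ↔ (lineGraph ℓ).Adj i j := by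
  simp [lineGraph]

lemma lineGraph_adj_succ_zero {ℓ : ℕ} {i : Fin (ℓ+1)} :
    (lineGraph (ℓ+2)).Adj i.succ 0 ↔ i = 0 := by
  simp only [lineGraph, Fin.val_succ, Fin.val_zero, Fin.ext_iff]
  omega

def SilentLeftStep (P : Protocol Q M) {ℓ : ℕ} (L L' : Fin ℓ → Q) : Prop :=
  ∃ v t, Step (lineGraph ℓ) P v t L L' ∧ (IsBrdT t → (v : ℕ) ≠ 0)

def SilentLeftReach (P : Protocol Q M) {ℓ : ℕ} : (Fin ℓ → Q) → (Fin ℓ → Q) → Prop :=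
  Relation.ReflTransGen (SilentLeftStep P)

lemma SilentLeftReach.reach {ℓ : ℕ} {L L' : Fin ℓ → Q} (h : SilentLeftReach P L L') :
    Reach (lineGraph ℓ) P L L' :=
  Relation.ReflTransGen.mono (fun _ _ ⟨v, t, hs, _⟩ => ⟨v, t, hs⟩) _ _ h

lemma silentLeftStep_tau {ℓ : ℕ} {L : Fin ℓ → Q} {v : Fin ℓ} {q : Q}
    (h : (L v, Act.tau, q) ∈ P.delta) : SilentLeftStep P L (Function.update L v q) :=
  ⟨v, _, step_tau h, fun ⟨_, hm⟩ => by cases hm⟩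

lemma exists_silentLeftStep_brd {k : ℕ} {L : Fin (k+2) → Q} {m : M} {a b : Q}
    (hb : (L 1, Act.brd m, b) ∈ P.delta)
    (ha : (L 0, Act.rcv m, a) ∈ P.delta ∨ (¬ canRecv P (L 0) m ∧ a = L 0)) :
    ∃ L' : Fin (k+2) → Q, SilentLeftStep P L L' ∧ L' 0 = a ∧ L' 1 = b := by
  classical
  have hadj : (lineGraph (k+2)).Adj 1 0 := Or.inr (by simp)
  let R : Fin (k+2) → Q := fun u => if u = 0 then a else receiveOrStay P m (L u)
  have hR : ∀ u, (lineGraph (k+2)).Adj 1 u →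
      (L u, Act.rcv m, R u) ∈ P.delta ∨ (¬ canRecv P (L u) m ∧ R u = L u) := by
    intro u _
    by_cases hu : u = 0
    · subst hu; simpa [R] using ha
    · simpa [R, hu] using receiveOrStay_spec P m (L u)
  refine ⟨_, ⟨1, _, step_brd _ hb hR, fun _ => by simp⟩, ?_, by simp⟩
  simp [hadj, R]

lemma silentLeftStep_cons {ℓ : ℕ} {L L' : Fin ℓ → Q} (h : SilentLeftStep P L L') :
    SilentLeftStep P (Fin.cons P.qin L : Fin (ℓ+1) → Q) (Fin.cons P.qin L') := by
  obtain ⟨v, ⟨q, α, p⟩, ⟨ht, hv, hv', hrest⟩, hsilent⟩ := h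
  refine ⟨v.succ, (q, α, p), ⟨ht, by simpa using hv, by simpa using hv', ?_⟩,
    fun _ => by simp⟩
  cases α with
  | tau =>
    intro u hu
    cases u using Fin.cases with
    | zero => rfl
    | succ i => simpa using hrest i (by simpa using hu)
  | rcv m => exact hrest
  | brd m =>
    obtain ⟨hnbrs, hothers⟩ := hrest
    cases ℓ with
    | zero => exact v.elim0
    | succ ℓ =>
      have hv0 : v ≠ 0 := fun h => hsilent ⟨m, rfl⟩ (by simp [h])
      refine ⟨fun u hu => ?_, fun u hu hnadj => ?_⟩
      · cases u using Fin.cases with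
        | zero => exact absurd (lineGraph_adj_succ_zero.mp hu) hv0
        | succ i => simpa using hnbrs i (lineGraph_adj_succ_succ.mp hu)
      · cases u using Fin.cases with
        | zero => rfl
        | succ i =>
          simpa using hothers i (by simpa using hu) (hnadj ∘ lineGraph_adj_succ_succ.mpr)

lemma silentLeftReach_cons {ℓ : ℕ} {L L' : Fin ℓ → Q} (h : SilentLeftReach P L L') :
    SilentLeftReach P (Fin.cons P.qin L : Fin (ℓ+1) → Q) (Fin.cons P.qin L') :=
  Relation.ReflTransGen.lift _ (fun _ _ hs => silentLeftStep_cons hs) _ _ h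

lemma cons_qin_initConf {ℓ : ℕ} :
    (Fin.cons P.qin (initConf P) : Fin (ℓ+1) → Q) = initConf P := by
  funext u
  cases u using Fin.cases <;> rfl

def SilentlyRealizable (P : Protocol Q M) (p : Q × Q) : Prop :=
  ∃ (k : ℕ) (L : Fin (k+2) → Q), SilentLeftReach P (initConf P) L ∧ L 0 = p.1 ∧ L 1 = p.2

lemma silentlyRealizable_qin : SilentlyRealizable P (P.qin, P.qin) :=
  ⟨0, initConf P, .refl, rfl, rfl⟩

lemma SilentlyRealizable.tau_left {q₁ p₁ q₂ : Q} (h : SilentlyRealizable P (p₁, q₂))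
    (ht : (p₁, Act.tau, q₁) ∈ P.delta) : SilentlyRealizable P (q₁, q₂) := by
  obtain ⟨k, L, hr, h0 : L 0 = p₁, h1 : L 1 = q₂⟩ := h
  subst h0 h1
  exact ⟨k, _, hr.tail (silentLeftStep_tau (v := 0) ht), by simp, by simp⟩

lemma SilentlyRealizable.tau_right {q₁ p₂ q₂ : Q} (h : SilentlyRealizable P (q₁, p₂))
    (ht : (p₂, Act.tau, q₂) ∈ P.delta) : SilentlyRealizable P (q₁, q₂) := by
  obtain ⟨k, L, hr, h0 : L 0 = q₁, h1 : L 1 = p₂⟩ := h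
  subst h0 h1
  exact ⟨k, _, hr.tail (silentLeftStep_tau (v := 1) ht), by simp, by simp⟩

lemma SilentlyRealizable.brd {q₁ p₁ p₂ q₂ : Q} {m : M} (h : SilentlyRealizable P (p₁, p₂))
    (hb : (p₂, Act.brd m, q₂) ∈ P.delta)
    (hr : (p₁, Act.rcv m, q₁) ∈ P.delta ∨ (¬ canRecv P p₁ m ∧ q₁ = p₁)) :
    SilentlyRealizable P (q₁, q₂) := by
  obtain ⟨k, L, hreach, h0 : L 0 = p₁, h1 : L 1 = p₂⟩ := h
  subst h0 h1
  obtain ⟨L', hstep, h0', h1'⟩ := exists_silentLeftStep_brd hb hr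
  exact ⟨k, L', hreach.tail hstep, h0', h1'⟩

lemma SilentlyRealizable.cons_qin {q₁ q₂ : Q} (h : SilentlyRealizable P (q₁, q₂)) :
    SilentlyRealizable P (P.qin, q₁) := by
  obtain ⟨k, L, hr, h0, _⟩ := h
  exact ⟨k+1, Fin.cons P.qin L, cons_qin_initConf ▸ silentLeftReach_cons hr, rfl, h0⟩

lemma pairStep_subset_silentlyRealizable {S : Set (Q × Q)}
    (hS : S ⊆ {p | SilentlyRealizable P p}) : pairStep P S ⊆ {p | SilentlyRealizable P p} := by
  rintro ⟨q₁, q₂⟩ h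
  rcases h with (((((h | ⟨p₁, hp, ht⟩) | ⟨p₂, hp, ht⟩) | ⟨p₁, p₂, m, hp, hb, hr⟩) |
    ⟨p₂, m, hp, hb, hr⟩) | ⟨rfl, q', hp⟩)
  · exact hS h
  · exact (hS hp).tau_left ht
  · exact (hS hp).tau_right ht
  · exact (hS hp).brd hb (Or.inl hr)
  · exact (hS hp).brd hb (Or.inr ⟨hr, rfl⟩)
  · exact (hS hp).cons_qin

lemma silentlyRealizable_of_mem_Siter {n : ℕ} {p : Q × Q} (h : p ∈ Siter P n) :
    SilentlyRealizable P p := by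
  induction n generalizing p with
  | zero => exact (Set.mem_singleton_iff.mp h) ▸ silentlyRealizable_qin
  | succ n ih => exact pairStep_subset_silentlyRealizable (fun _ => ih) h

end Realizable

/-- every pair in the fixpoint `S` is realizable at the two leftmost
vertices of some line topology. -/
theorem pair_fixpoint_realizable {Q M : Type} (P : Protocol Q M) (q₁ q₂ : Q)
    (h : (q₁, q₂) ∈ ⋃ n, Siter P n) :
    ∃ (k : ℕ) (L : Fin (k+2) → Q),
      Reach (lineGraph (k+2)) P (initConf P) L ∧ L 0 = q₁ ∧ L 1 = q₂ := by
  obtain ⟨n, hn⟩ := Set.mem_iUnion.mp h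
  obtain ⟨k, L, hr, h0, h1⟩ := silentlyRealizable_of_mem_Siter hn
  exact ⟨k, L, hr.reach, h0, h1⟩

end BN
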